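/- arXiv:2309.10721 — 4 statements merged into one kernel-verified Lean document; each statement's English description precedes it below -/
import Mathlib

section
/- For f_k(x) = x₁ + … + x_k on X_k and t > 0, θ_k ∫_{X_k} (1 − e^{−t f_k(x)}) dx = (θ_k/k)(1 − ((1−e^{−t})/t)^k). -/
open MeasureTheory

def XsetPi (k : ℕ) : Set (Fin k → ℝ) :=
  {x | (∀ i, x i ∈ Set.Icc (0 : ℝ) 1) ∧ ∀ (h : 0 < k) (i : Fin k), x ⟨0, h⟩ ≤ x i}

namespace IntegralOneSubExpAux

variable {k : ℕ}

/-- The set where coordinate `j` is the minimum, inside the unit cube. -/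
def S (k : ℕ) (j : Fin k) : Set (Fin k → ℝ) :=
  {x | (∀ i, x i ∈ Set.Icc (0 : ℝ) 1) ∧ ∀ i, x j ≤ x i}

lemma isClosed_S (j : Fin k) : IsClosed (S k j) := by
  have h1 : IsClosed {x : Fin k → ℝ | ∀ i, x i ∈ Set.Icc (0 : ℝ) 1} := by
    have : {x : Fin k → ℝ | ∀ i, x i ∈ Set.Icc (0 : ℝ) 1} =
        Set.pi Set.univ (fun _ => Set.Icc (0 : ℝ) 1) := by
      ext x
      simp only [Set.mem_setOf_eq, Set.mem_pi, Set.mem_univ, forall_true_left]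
    rw [this]
    exact isClosed_set_pi fun i _ => isClosed_Icc
  have h2 : IsClosed {x : Fin k → ℝ | ∀ i, x j ≤ x i} := by
    have : {x : Fin k → ℝ | ∀ i, x j ≤ x i} = ⋂ i, {x : Fin k → ℝ | x j ≤ x i} := by
      ext x; simp
    rw [this]
    exact isClosed_iInter fun i =>
      isClosed_le (continuous_apply j) (continuous_apply i)
  exact h1.inter h2

lemma cube_eq_iUnion (hk : 0 < k) :
    Set.pi Set.univ (fun _ : Fin k => Set.Icc (0 : ℝ) 1) = ⋃ j, S k j := by
  ext x
  simp only [Set.mem_pi, Set.mem_univ, forall_true_left, Set.mem_iUnion]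
  constructor
  · intro hx
    have : Nonempty (Fin k) := ⟨⟨0, hk⟩⟩
    obtain ⟨j, hj⟩ := Finite.exists_min x
    exact ⟨j, fun i => hx i, hj⟩
  · rintro ⟨j, hj, -⟩ i
    exact hj i

lemma volume_inter_eq_zero {i j : Fin k} (hij : i ≠ j) :
    volume (S k i ∩ S k j) = 0 := by
  set f : (Fin k → ℝ) →ₗ[ℝ] ℝ :=
    (LinearMap.proj i : (Fin k → ℝ) →ₗ[ℝ] ℝ) - (LinearMap.proj j : (Fin k → ℝ) →ₗ[ℝ] ℝ) with hf
  have hsub : S k i ∩ S k j ⊆ (LinearMap.ker f : Set (Fin k → ℝ)) := by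
    rintro x ⟨⟨-, hi⟩, ⟨-, hj⟩⟩
    simp only [SetLike.mem_coe, LinearMap.mem_ker, hf, LinearMap.sub_apply,
      LinearMap.proj_apply]
    have := le_antisymm (hi j) (hj i)
    linarith
  refine measure_mono_null hsub (Measure.addHaar_submodule _ _ ?_)
  rw [Ne, LinearMap.ker_eq_top]
  intro h
  have h1 : f (Pi.single i 1) = 0 := by rw [h]; rfl
  simp only [hf, LinearMap.sub_apply, LinearMap.proj_apply, Pi.single_eq_same,
    Pi.single_eq_of_ne (Ne.symm hij)] at h1
  norm_num at h1

end IntegralOneSubExpAux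

open IntegralOneSubExpAux in
/-- `θ_k ∫_{X_k} (1 − e^{−t(x₁+…+x_k)}) dx = (θ_k/k)(1 − ((1−e^{−t})/t)^k)` for `t > 0`. -/
theorem integral_one_sub_exp_sum (k : ℕ) (hk : 1 ≤ k) (θ : ℝ) (t : ℝ) (ht : 0 < t) :
    θ * ∫ x in XsetPi k, (1 - Real.exp (-t * ∑ i, x i)) =
    (θ / k) * (1 - ((1 - Real.exp (-t)) / t) ^ k) := by
  have hk0 : 0 < k := hk
  set j0 : Fin k := ⟨0, hk0⟩ with hj0
  set g : (Fin k → ℝ) → ℝ := fun x => 1 - Real.exp (-t * ∑ i, x i) with hg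
  have hgc : Continuous g := by fun_prop
  set C : Set (Fin k → ℝ) := Set.pi Set.univ (fun _ => Set.Icc (0 : ℝ) 1) with hC
  have hCc : IsCompact C := isCompact_univ_pi fun _ => isCompact_Icc
  have hXS : XsetPi k = S k j0 := by
    ext x
    constructor
    · rintro ⟨h1, h2⟩; exact ⟨h1, h2 hk0⟩
    · rintro ⟨h1, h2⟩; exact ⟨h1, fun h i => h2 i⟩
  -- integral over each `S j` equals the one over `S j0`
  have hSS : ∀ j : Fin k, ∫ x in S k j, g x = ∫ x in S k j0, g x := by
    intro j
    set e : Fin k ≃ Fin k := Equiv.swap j0 j with he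
    set T : (Fin k → ℝ) ≃ᵐ (Fin k → ℝ) :=
      MeasurableEquiv.piCongrLeft (fun _ : Fin k => ℝ) e with hT
    have hTapp : ∀ (x : Fin k → ℝ) (i : Fin k), T x i = x (e.symm i) := by
      intro x i
      conv_lhs => rw [← e.apply_symm_apply i]
      exact MeasurableEquiv.piCongrLeft_apply_apply (β := fun _ : Fin k => ℝ) e x (e.symm i)
    have hpre : T ⁻¹' (S k j0) = S k j := by
      ext x
      simp only [Set.mem_preimage, S, Set.mem_setOf_eq]
      constructor
      · rintro ⟨h1, h2⟩
        refine ⟨fun i => by simpa [hTapp] using h1 (e i), fun i => ?_⟩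
        have := h2 (e i)
        simpa [hTapp, he] using this
      · rintro ⟨h1, h2⟩
        refine ⟨fun i => by simpa [hTapp] using h1 (e.symm i), fun i => ?_⟩
        simp only [hTapp]
        have := h2 (e.symm i)
        simpa [he] using this
    have hcomp : ∀ x, g (T x) = g x := by
      intro x
      have hs : ∑ i, T x i = ∑ i, x i := by
        rw [Finset.sum_congr rfl fun i _ => hTapp x i]
        exact Equiv.sum_comp e.symm x
      simp only [hg, hs]
    have h := (volume_measurePreserving_piCongrLeft (fun _ : Fin k => ℝ) e).setIntegral_preimage_emb
      T.measurableEmbedding g (S k j0)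
    rw [hpre] at h
    rw [← h]
    exact setIntegral_congr_fun ((isClosed_S j).measurableSet) fun x _ => (hcomp x).symm
  have hint : IntegrableOn g C := hgc.continuousOn.integrableOn_compact hCc
  -- sum over j
  have hsum : ∫ x in C, g x = (k : ℝ) * ∫ x in S k j0, g x := by
    rw [hC, cube_eq_iUnion hk0,
      integral_iUnion_ae (fun j => (isClosed_S j).measurableSet.nullMeasurableSet)
        (fun i j hij => volume_inter_eq_zero hij)
        (by rwa [← cube_eq_iUnion hk0]), tsum_fintype]
    rw [Finset.sum_congr rfl fun j _ => hSS j, Finset.sum_const, Finset.card_univ,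
      Fintype.card_fin, nsmul_eq_mul]
  -- compute the integral over the cube
  have hC1 : ∫ _x in C, (1 : ℝ) = 1 := by
    rw [setIntegral_const, smul_eq_mul, mul_one, hC, measureReal_def, volume_pi_pi]
    simp [Real.volume_Icc]
  set F : ℝ → ℝ := Set.indicator (Set.Icc 0 1) (fun y => Real.exp (-t * y)) with hF
  have hprod : ∀ x : Fin k → ℝ,
      Set.indicator C (fun x => Real.exp (-t * ∑ i, x i)) x = ∏ i, F (x i) := by
    intro x
    by_cases hx : x ∈ C
    · rw [Set.indicator_of_mem hx]
      have hxi : ∀ i, x i ∈ Set.Icc (0 : ℝ) 1 := fun i => hx i (Set.mem_univ i)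
      rw [Finset.prod_congr rfl fun i _ => Set.indicator_of_mem (hxi i) _,
        ← Real.exp_sum]
      congr 1
      rw [Finset.mul_sum]
    · rw [Set.indicator_of_notMem hx]
      simp only [hC, Set.mem_pi, Set.mem_univ, forall_true_left, not_forall] at hx
      obtain ⟨i, hi⟩ := hx
      exact (Finset.prod_eq_zero (Finset.mem_univ i)
        (by simp [hF, Set.indicator_of_notMem hi])).symm
  have hone : ∫ y, F y = (1 - Real.exp (-t)) / t := by
    rw [hF, integral_indicator measurableSet_Icc, integral_Icc_eq_integral_Ioc,
      ← intervalIntegral.integral_of_le zero_le_one,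
      intervalIntegral.integral_comp_mul_left (f := fun y => Real.exp y)
        (by intro h; linarith [neg_eq_zero.mp h] : -t ≠ 0)]
    have htne : t ≠ 0 := ht.ne'
    simp only [mul_zero, mul_one, integral_exp, smul_eq_mul, Real.exp_zero]
    field_simp
    ring
  have hCexp : ∫ x in C, Real.exp (-t * ∑ i, x i) = ((1 - Real.exp (-t)) / t) ^ k := by
    rw [← integral_indicator hCc.measurableSet,
      show (Set.indicator C fun x => Real.exp (-t * ∑ i, x i)) = fun x => ∏ i, F (x i)
        from funext hprod,
      volume_pi, integral_fintype_prod_eq_pow (ι := Fin k) F, hone, Fintype.card_fin]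
  have hint1 : IntegrableOn (fun _ : Fin k → ℝ => (1 : ℝ)) C :=
    integrableOn_const hCc.measure_lt_top.ne
  have hint2 : IntegrableOn (fun x : Fin k → ℝ => Real.exp (-t * ∑ i, x i)) C :=
    (by fun_prop :
      Continuous fun x : Fin k → ℝ => Real.exp (-t * ∑ i, x i)).continuousOn.integrableOn_compact hCc
  have hCg : ∫ x in C, g x = 1 - ((1 - Real.exp (-t)) / t) ^ k := by
    simp only [hg]
    rw [integral_sub hint1 hint2, hC1, hCexp]
  have hkne : (k : ℝ) ≠ 0 := Nat.cast_ne_zero.2 hk0.ne'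
  have hI : ∫ x in S k j0, g x = (1 - ((1 - Real.exp (-t)) / t) ^ k) / k := by
    rw [hCg] at hsum
    field_simp at hsum ⊢
    linarith
  rw [show (∫ x in XsetPi k, (1 - Real.exp (-t * ∑ i, x i))) = ∫ x in S k j0, g x
    from by rw [hXS], hI]
  ring
end

section
/- For k ≥ 2 and x ∈ [0,1], the Lebesgue measure of the set {x ∈ X_k : max_i x_i − min_i x_i ≤ x} equals x^{k−1}(1−x) + x^k/k. -/
open MeasureTheory

/-- The Lebesgue measure of `{y ∈ X_k : max_i y_i − min_i y_i ≤ x}` is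
`x^{k−1}(1−x) + x^k/k` for `k ≥ 2`, `x ∈ [0,1]`. -/
theorem volume_range_le (k : ℕ) (hk : 2 ≤ k) (x : ℝ) (hx : x ∈ Set.Icc (0 : ℝ) 1) :
    (volume {y : Fin k → ℝ | y ∈ XsetPi k ∧ (⨆ i, y i) - (⨅ i, y i) ≤ x}).toReal =
    x ^ (k - 1) * (1 - x) + x ^ k / k := by
  obtain ⟨x0, x1⟩ := hx
  obtain ⟨n, rfl⟩ : ∃ n, k = n + 1 := ⟨k - 1, by omega⟩
  have h0 : (⟨0, by omega⟩ : Fin (n+1)) = 0 := by ext; simp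
  -- Step 1: rewrite the set
  have hS : {y : Fin (n+1) → ℝ | y ∈ XsetPi (n+1) ∧ (⨆ i, y i) - (⨅ i, y i) ≤ x} =
      {y : Fin (n+1) → ℝ | y 0 ∈ Set.Icc (0:ℝ) 1 ∧
        ∀ i, y i ∈ Set.Icc (y 0) (min (y 0 + x) 1)} := by
    ext y
    simp only [Set.mem_setOf_eq, XsetPi]
    constructor
    · rintro ⟨⟨hIcc, hle⟩, hrange⟩
      have hle0 : ∀ i, y 0 ≤ y i := by
        intro i
        have := hle (by omega) i
        rwa [h0] at this
      have hinf : (⨅ i, y i) = y 0 :=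
        le_antisymm (ciInf_le (Set.Finite.bddBelow (Set.finite_range y)) 0) (le_ciInf hle0)
      have hsup : ∀ i, y i ≤ y 0 + x := by
        intro i
        have h1 : y i ≤ ⨆ j, y j := le_ciSup (Set.Finite.bddAbove (Set.finite_range y)) i
        rw [hinf] at hrange
        linarith
      exact ⟨hIcc 0, fun i => ⟨hle0 i, le_min (hsup i) (hIcc i).2⟩⟩
    · rintro ⟨hy0, hmem⟩
      have hle0 : ∀ i, y 0 ≤ y i := fun i => (hmem i).1
      have hub : ∀ i, y i ≤ y 0 + x := fun i => le_trans (hmem i).2 (min_le_left _ _)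
      have h1b : ∀ i, y i ≤ 1 := fun i => le_trans (hmem i).2 (min_le_right _ _)
      have hinf : (⨅ i, y i) = y 0 :=
        le_antisymm (ciInf_le (Set.Finite.bddBelow (Set.finite_range y)) 0) (le_ciInf hle0)
      refine ⟨⟨fun i => ⟨le_trans hy0.1 (hle0 i), h1b i⟩, fun h i => ?_⟩, ?_⟩
      · rw [h0]; exact hle0 i
      · rw [hinf, sub_le_iff_le_add']
        exact ciSup_le hub
  rw [hS]
  -- Step 2: transfer to product space
  set T : Set (ℝ × (Fin n → ℝ)) :=
    {p | p.1 ∈ Set.Icc (0:ℝ) 1 ∧ ∀ j, p.2 j ∈ Set.Icc p.1 (min (p.1 + x) 1)} with hTdef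
  have hT : MeasurableSet T := by
    apply MeasurableSet.inter
    · exact measurable_fst measurableSet_Icc
    · show MeasurableSet {p : ℝ × (Fin n → ℝ) | ∀ j, p.2 j ∈ Set.Icc p.1 (min (p.1 + x) 1)}
      rw [Set.setOf_forall]
      refine MeasurableSet.iInter fun j => ?_
      have : {p : ℝ × (Fin n → ℝ) | p.2 j ∈ Set.Icc p.1 (min (p.1 + x) 1)} =
          {p : ℝ × (Fin n → ℝ) | p.1 ≤ p.2 j} ∩ {p | p.2 j ≤ min (p.1 + x) 1} := rfl
      rw [this]
      have hm : Measurable fun p : ℝ × (Fin n → ℝ) => p.2 j :=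
        (measurable_pi_apply j).comp measurable_snd
      exact (measurableSet_le measurable_fst hm).inter
        (measurableSet_le hm (((measurable_fst.add_const x)).min measurable_const))
  have hpre : (MeasurableEquiv.piFinSuccAbove (fun _ : Fin (n+1) => ℝ) 0) ⁻¹' T =
      {y : Fin (n+1) → ℝ | y 0 ∈ Set.Icc (0:ℝ) 1 ∧
        ∀ i, y i ∈ Set.Icc (y 0) (min (y 0 + x) 1)} := by
    ext y
    simp only [Set.mem_preimage, MeasurableEquiv.piFinSuccAbove_apply, hTdef,
      Set.mem_setOf_eq, Fin.insertNthEquiv, Equiv.coe_fn_symm_mk, Fin.removeNth,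
      Fin.succAbove_zero]
    constructor
    · rintro ⟨h1, h2⟩
      refine ⟨h1, fun i => ?_⟩
      rcases Fin.eq_zero_or_eq_succ i with rfl | ⟨j, rfl⟩
      · exact ⟨le_refl _, le_min (by linarith [h1.1]) h1.2⟩
      · exact h2 j
    · rintro ⟨h1, h2⟩
      exact ⟨h1, fun j => h2 (Fin.succ j)⟩
  have hmp := measurePreserving_piFinSuccAbove (fun _ : Fin (n+1) => (volume : Measure ℝ)) 0
  have hkey : volume {y : Fin (n+1) → ℝ | y 0 ∈ Set.Icc (0:ℝ) 1 ∧
      ∀ i, y i ∈ Set.Icc (y 0) (min (y 0 + x) 1)} =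
      ((volume : Measure ℝ).prod (Measure.pi fun _ : Fin n => (volume : Measure ℝ))) T := by
    rw [← hpre, ← hmp.map_eq, MeasurableEquiv.map_apply, volume_pi]
  rw [hkey, Measure.prod_apply hT]
  -- Step 3: compute the slices
  have hslice : (fun t => (Measure.pi fun _ : Fin n => (volume : Measure ℝ)) (Prod.mk t ⁻¹' T)) =
      (Set.Icc (0:ℝ) 1).indicator (fun t => ENNReal.ofReal (min (t + x) 1 - t) ^ n) := by
    funext t
    by_cases ht : t ∈ Set.Icc (0:ℝ) 1
    · have hset : Prod.mk t ⁻¹' T = Set.pi Set.univ (fun _ : Fin n => Set.Icc t (min (t + x) 1)) := by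
        ext z
        exact ⟨fun hz => Set.mem_univ_pi.mpr fun j => hz.2 j,
          fun hz => ⟨ht, fun j => Set.mem_univ_pi.mp hz j⟩⟩
      rw [hset, Measure.pi_pi, Set.indicator_of_mem ht]
      simp [Real.volume_Icc]
    · have hset : Prod.mk t ⁻¹' T = ∅ :=
        Set.eq_empty_iff_forall_notMem.mpr fun z hz => ht hz.1
      rw [hset, Set.indicator_of_notMem ht]
      simp
  have hli : (∫⁻ t, (Measure.pi fun _ : Fin n => (volume : Measure ℝ)) (Prod.mk t ⁻¹' T)) =
      ∫⁻ t in Set.Icc (0:ℝ) 1, ENNReal.ofReal (min (t + x) 1 - t) ^ n := by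
    rw [hslice]
    exact lintegral_indicator measurableSet_Icc _
  rw [hli]
  -- Step 4: convert to a real integral
  have hf0 : ∀ t ∈ Set.Icc (0:ℝ) 1, 0 ≤ min (t + x) 1 - t := by
    intro t ht
    have := le_min (by linarith [ht.1] : t ≤ t + x) ht.2
    linarith
  have hcont : Continuous fun t : ℝ => (min (t + x) 1 - t) ^ n :=
    (((continuous_id.add continuous_const).min continuous_const).sub continuous_id).pow n
  have heq : (∫⁻ t in Set.Icc (0:ℝ) 1, ENNReal.ofReal (min (t + x) 1 - t) ^ n) =
      ∫⁻ t in Set.Icc (0:ℝ) 1, ENNReal.ofReal ((min (t + x) 1 - t) ^ n) := by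
    refine lintegral_congr_ae ?_
    filter_upwards [ae_restrict_mem measurableSet_Icc] with t ht
    rw [ENNReal.ofReal_pow (hf0 t ht)]
  rw [heq]
  have hint := MeasureTheory.integral_eq_lintegral_of_nonneg_ae
    (μ := volume.restrict (Set.Icc (0:ℝ) 1))
    (f := fun t => (min (t + x) 1 - t) ^ n)
    (by filter_upwards [ae_restrict_mem measurableSet_Icc] with t ht
        exact pow_nonneg (hf0 t ht) n)
    hcont.aestronglyMeasurable
  rw [← hint]
  -- Step 5: compute the real integral
  have hIcc : (∫ t in Set.Icc (0:ℝ) 1, (min (t + x) 1 - t) ^ n) =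
      ∫ t in (0:ℝ)..1, (min (t + x) 1 - t) ^ n := by
    rw [MeasureTheory.integral_Icc_eq_integral_Ioc,
      ← intervalIntegral.integral_of_le zero_le_one]
  rw [hIcc]
  have hi1 : IntervalIntegrable (fun t : ℝ => (min (t + x) 1 - t) ^ n) volume 0 (1 - x) :=
    hcont.intervalIntegrable _ _
  have hi2 : IntervalIntegrable (fun t : ℝ => (min (t + x) 1 - t) ^ n) volume (1 - x) 1 :=
    hcont.intervalIntegrable _ _
  rw [← intervalIntegral.integral_add_adjacent_intervals hi1 hi2]
  have hpiece1 : (∫ t in (0:ℝ)..(1 - x), (min (t + x) 1 - t) ^ n) = (1 - x) * x ^ n := by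
    rw [intervalIntegral.integral_congr (g := fun _ => x ^ n)]
    · rw [intervalIntegral.integral_const]
      simp [smul_eq_mul]
    · intro t ht
      rw [Set.uIcc_of_le (by linarith)] at ht
      have : min (t + x) 1 = t + x := min_eq_left (by linarith [ht.2])
      simp [this]
  have hpiece2 : (∫ t in (1 - x:ℝ)..1, (min (t + x) 1 - t) ^ n) = x ^ (n + 1) / (n + 1) := by
    rw [intervalIntegral.integral_congr (g := fun t => (1 - t) ^ n)]
    · rw [intervalIntegral.integral_comp_sub_left (fun u => u ^ n) 1]
      simp [integral_pow]
    · intro t ht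
      rw [Set.uIcc_of_le (by linarith)] at ht
      have : min (t + x) 1 = 1 := min_eq_right (by linarith [ht.1])
      simp only [this]
  rw [hpiece1, hpiece2]
  have : (n + 1) - 1 = n := by omega
  rw [this]
  push_cast
  ring
end

section
/- Let Ψ be a homogeneous Poisson process on X_k with intensity θ_k > 0, k ≥ 2, and let R = max over atoms of Ψ of (max coordinate − min coordinate), with R = 0 if Ψ is empty. Then for x ∈ [0,1), P(R ≤ x) = exp{(θ_k/k)(k x^{k−1} − (k−1) x^k − 1)}. -/
open MeasureTheory ProbabilityTheory

noncomputable def coordRange {k : ℕ} (y : Fin k → ℝ) : ℝ := (⨆ i, y i) - (⨅ i, y i)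

section helpers

variable {m : ℕ}

lemma sub_le_coordRange (y : Fin (m+1) → ℝ) (i j : Fin (m+1)) :
    y i - y j ≤ coordRange y := by
  have h1 : y i ≤ ⨆ i, y i := le_ciSup (Set.Finite.bddAbove (Set.finite_range y)) i
  have h2 : ⨅ i, y i ≤ y j := ciInf_le (Set.Finite.bddBelow (Set.finite_range y)) j
  unfold coordRange; linarith

lemma coordRange_exists (y : Fin (m+1) → ℝ) :
    ∃ i j, coordRange y = y i - y j := by
  obtain ⟨i, -, hi⟩ := Finset.exists_max_image Finset.univ y ⟨0, Finset.mem_univ 0⟩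
  obtain ⟨j, -, hj⟩ := Finset.exists_min_image Finset.univ y ⟨0, Finset.mem_univ 0⟩
  refine ⟨i, j, le_antisymm ?_ (sub_le_coordRange y i j)⟩
  have h1 : ⨆ i, y i ≤ y i := ciSup_le fun i' => hi i' (Finset.mem_univ _)
  have h2 : y j ≤ ⨅ i, y i := le_ciInf fun j' => hj j' (Finset.mem_univ _)
  unfold coordRange; linarith

lemma mem_XsetPi_iff (y : Fin (m+1) → ℝ) :
    y ∈ XsetPi (m+1) ↔ y 0 ∈ Set.Icc (0:ℝ) 1 ∧ ∀ i, y i ∈ Set.Icc (y 0) ((fun _ : ℝ => (1:ℝ)) (y 0)) := by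
  have h0 : (⟨0, Nat.succ_pos m⟩ : Fin (m+1)) = 0 := rfl
  constructor
  · rintro ⟨h1, h2⟩
    exact ⟨h1 0, fun i => ⟨h0 ▸ h2 (Nat.succ_pos m) i, (h1 i).2⟩⟩
  · rintro ⟨h1, h2⟩
    refine ⟨fun i => ⟨le_trans h1.1 (h2 i).1, (h2 i).2⟩, fun h i => ?_⟩
    have h0' : (⟨0, h⟩ : Fin (m+1)) = 0 := rfl
    simpa [h0'] using (h2 i).1

lemma inf_eq_zeroth (y : Fin (m+1) → ℝ) (hy : y ∈ XsetPi (m+1)) :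
    (⨅ i, y i) = y 0 := by
  have h0 : (⟨0, Nat.succ_pos m⟩ : Fin (m+1)) = 0 := rfl
  refine le_antisymm (ciInf_le (Set.Finite.bddBelow (Set.finite_range y)) 0)
    (le_ciInf fun i => ?_)
  exact h0 ▸ hy.2 (Nat.succ_pos m) i

lemma coordRange_le_iff (y : Fin (m+1) → ℝ) (hy : y ∈ XsetPi (m+1)) (c : ℝ) :
    coordRange y ≤ c ↔ ∀ i, y i ≤ y 0 + c := by
  constructor
  · intro h i
    have h1 : y i - y 0 ≤ coordRange y := sub_le_coordRange y i 0
    linarith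
  · intro h
    have h1 : (⨆ i, y i) ≤ y 0 + c := ciSup_le fun i => h i
    have h2 : (⨅ i, y i) = y 0 := inf_eq_zeroth y hy
    unfold coordRange
    rw [h2]
    linarith

lemma coordRange_mem_bound (y : Fin (m+1) → ℝ) (hy : y ∈ XsetPi (m+1)) :
    coordRange y ≤ 1 := by
  rw [coordRange_le_iff y hy]
  intro i
  have := (hy.1 i).2
  have := (hy.1 0).1
  linarith

end helpers

lemma slice_vol (m : ℕ) (g : ℝ → ℝ) (hg : Measurable g)
    (htg : ∀ t ∈ Set.Icc (0:ℝ) 1, t ≤ g t) :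
    volume {y : Fin (m+1) → ℝ | y 0 ∈ Set.Icc (0:ℝ) 1 ∧ ∀ i, y i ∈ Set.Icc (y 0) (g (y 0))}
      = ∫⁻ t in Set.Icc (0:ℝ) 1, ENNReal.ofReal (g t - t) ^ m := by
  set T : Set (ℝ × (Fin m → ℝ)) :=
    {p | p.1 ∈ Set.Icc (0:ℝ) 1 ∧ ∀ j, p.2 j ∈ Set.Icc p.1 (g p.1)} with hTdef
  have hT : MeasurableSet T := by
    have : T = (Prod.fst ⁻¹' Set.Icc (0:ℝ) 1) ∩
        ⋂ j : Fin m, ({p : ℝ × (Fin m → ℝ) | p.1 ≤ p.2 j} ∩ {p | p.2 j ≤ g p.1}) := by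
      ext p
      simp only [hTdef, Set.mem_setOf_eq, Set.mem_inter_iff, Set.mem_iInter, Set.mem_preimage,
        Set.mem_Icc]
    rw [this]
    have hgf : Measurable fun p : ℝ × (Fin m → ℝ) => g p.1 := hg.comp measurable_fst
    refine (measurable_fst measurableSet_Icc).inter (MeasurableSet.iInter fun j => ?_)
    exact (measurableSet_le measurable_fst ((measurable_pi_apply (X := fun _ : Fin m => ℝ) j).comp measurable_snd)).inter
      (measurableSet_le ((measurable_pi_apply (X := fun _ : Fin m => ℝ) j).comp measurable_snd) hgf)
  have hpre : (MeasurableEquiv.piFinSuccAbove (fun _ : Fin (m+1) => ℝ) 0) ⁻¹' T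
      = {y : Fin (m+1) → ℝ | y 0 ∈ Set.Icc (0:ℝ) 1 ∧ ∀ i, y i ∈ Set.Icc (y 0) (g (y 0))} := by
    ext y
    simp only [Set.mem_preimage, MeasurableEquiv.piFinSuccAbove_apply, hTdef,
      Set.mem_setOf_eq, Fin.removeNth]
    constructor
    · rintro ⟨h1, h2⟩
      refine ⟨h1, fun i => ?_⟩
      rcases Fin.eq_zero_or_eq_succ i with rfl | ⟨j, rfl⟩
      · exact ⟨le_refl _, htg _ h1⟩
      · simpa [Fin.tail] using h2 j
    · rintro ⟨h1, h2⟩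
      exact ⟨h1, fun j => by simpa [Fin.tail] using h2 j.succ⟩
  calc volume {y : Fin (m+1) → ℝ | y 0 ∈ Set.Icc (0:ℝ) 1 ∧ ∀ i, y i ∈ Set.Icc (y 0) (g (y 0))}
      = ((volume : Measure ℝ).prod (volume : Measure (Fin m → ℝ))) T := by
        rw [← hpre]
        have := (measurePreserving_piFinSuccAbove (fun _ : Fin (m+1) => (volume : Measure ℝ)) 0)
        rw [volume_pi]
        exact this.measure_preimage_equiv T
    _ = ∫⁻ t, volume (Prod.mk t ⁻¹' T) := Measure.prod_apply hT
    _ = ∫⁻ t, (Set.Icc (0:ℝ) 1).indicator (fun t => ENNReal.ofReal (g t - t) ^ m) t := by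
        refine lintegral_congr fun t => ?_
        by_cases ht : t ∈ Set.Icc (0:ℝ) 1
        · have : Prod.mk t ⁻¹' T = Set.pi Set.univ (fun _ : Fin m => Set.Icc t (g t)) := by
            ext z
            rw [Set.mem_preimage, Set.mem_univ_pi]
            exact ⟨fun h => h.2, fun h => ⟨ht, h⟩⟩
          rw [this, Set.indicator_of_mem ht, volume_pi_pi]
          simp [Real.volume_Icc]
        · have : Prod.mk t ⁻¹' T = ∅ := by
            ext z
            rw [Set.mem_preimage]
            simp only [Set.mem_empty_iff_false, iff_false]
            exact fun h => ht h.1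
          rw [this, Set.indicator_of_notMem ht]
          simp
    _ = ∫⁻ t in Set.Icc (0:ℝ) 1, ENNReal.ofReal (g t - t) ^ m :=
        lintegral_indicator measurableSet_Icc _


lemma slice_meas (m : ℕ) (g : ℝ → ℝ) (hg : Measurable g) :
    MeasurableSet {y : Fin (m+1) → ℝ | y 0 ∈ Set.Icc (0:ℝ) 1 ∧ ∀ i, y i ∈ Set.Icc (y 0) (g (y 0))} := by
  have : {y : Fin (m+1) → ℝ | y 0 ∈ Set.Icc (0:ℝ) 1 ∧ ∀ i, y i ∈ Set.Icc (y 0) (g (y 0))}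
      = ((fun y : Fin (m+1) → ℝ => y 0) ⁻¹' Set.Icc (0:ℝ) 1) ∩
        ⋂ i : Fin (m+1), ({y : Fin (m+1) → ℝ | y 0 ≤ y i} ∩ {y | y i ≤ g (y 0)}) := by
    ext y
    simp only [Set.mem_setOf_eq, Set.mem_inter_iff, Set.mem_iInter, Set.mem_preimage, Set.mem_Icc]
  rw [this]
  refine ((measurable_pi_apply 0) measurableSet_Icc).inter (MeasurableSet.iInter fun i => ?_)
  exact (measurableSet_le (measurable_pi_apply 0) (measurable_pi_apply i)).inter
    (measurableSet_le (measurable_pi_apply i) (hg.comp (measurable_pi_apply 0)))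

lemma lint_conv (m : ℕ) (f : ℝ → ℝ) (hf : Continuous f)
    (hf0 : ∀ t ∈ Set.Icc (0:ℝ) 1, 0 ≤ f t) :
    ∫⁻ t in Set.Icc (0:ℝ) 1, ENNReal.ofReal (f t) ^ m
      = ENNReal.ofReal (∫ t in (0:ℝ)..1, f t ^ m) := by
  have h1 : ∀ᵐ t ∂(volume.restrict (Set.Icc (0:ℝ) 1)),
      ENNReal.ofReal (f t) ^ m = ENNReal.ofReal (f t ^ m) := by
    filter_upwards [ae_restrict_mem measurableSet_Icc] with t ht
    rw [← ENNReal.ofReal_pow (hf0 t ht)]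
  rw [lintegral_congr_ae h1, ← ofReal_integral_eq_lintegral_ofReal]
  · rw [intervalIntegral.integral_of_le zero_le_one, integral_Icc_eq_integral_Ioc]
  · exact (hf.pow m).integrableOn_Icc
  · filter_upwards [ae_restrict_mem measurableSet_Icc] with t ht
    exact pow_nonneg (hf0 t ht) m


lemma I1 (m : ℕ) : ∫ t in (0:ℝ)..1, (1 - t) ^ m = 1 / (m + 1) := by
  rw [intervalIntegral.integral_comp_sub_left (fun s => s ^ m) 1]
  simp [integral_pow]


lemma I2 (m : ℕ) (x : ℝ) (hx0 : 0 ≤ x) (hx1 : x ≤ 1) :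
    ∫ t in (0:ℝ)..1, (min 1 (t + x) - t) ^ m
      = (1 - x) * x ^ m + x ^ (m + 1) / (m + 1) := by
  have hc : Continuous fun t : ℝ => (min 1 (t + x) - t) ^ m :=
    ((continuous_const.min (continuous_id.add continuous_const)).sub continuous_id).pow m
  have hadd : (∫ t in (0:ℝ)..(1 - x), (min 1 (t + x) - t) ^ m)
      + ∫ t in (1 - x)..1, (min 1 (t + x) - t) ^ m
      = ∫ t in (0:ℝ)..1, (min 1 (t + x) - t) ^ m :=
    intervalIntegral.integral_add_adjacent_intervals
      (hc.intervalIntegrable _ _) (hc.intervalIntegrable _ _)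
  have h1 : (∫ t in (0:ℝ)..(1 - x), (min 1 (t + x) - t) ^ m) = (1 - x) * x ^ m := by
    rw [intervalIntegral.integral_congr (g := fun _ : ℝ => x ^ m)
      (fun t ht => ?_)]
    · simp
    · rw [Set.uIcc_of_le (by linarith)] at ht
      have : min 1 (t + x) = t + x := min_eq_right (by linarith [ht.2])
      rw [this]; ring_nf
  have h2 : (∫ t in (1 - x)..1, (min 1 (t + x) - t) ^ m) = x ^ (m + 1) / (m + 1) := by
    rw [intervalIntegral.integral_congr (g := fun t : ℝ => (1 - t) ^ m)
      (fun t ht => ?_)]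
    · rw [intervalIntegral.integral_comp_sub_left (fun s => s ^ m) 1]
      simp [integral_pow]
    · rw [Set.uIcc_of_le (by linarith)] at ht
      have : min 1 (t + x) = 1 := min_eq_left (by linarith [ht.1])
      rw [this]
  rw [← hadd, h1, h2]


/-- For a homogeneous Poisson process `Ψ` on `X_k` (`k ≥ 2`) with intensity `θ_k > 0`,
the maximum range `R` over atoms of `Ψ` (set to `0` when there are no atoms)
satisfies `P(R ≤ x) = exp{(θ_k/k)(k x^{k−1} − (k−1) x^k − 1)}` for `x ∈ [0,1)`. -/
theorem max_range_cdf (k : ℕ) (hk : 2 ≤ k) (θ : ℝ) (hθ : 0 < θ)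
    {Ω : Type*} [MeasurableSpace Ω] (P : Measure Ω) [IsProbabilityMeasure P]
    (Ψ : Ω → Measure (Fin k → ℝ))
    (μ : Measure (Fin k → ℝ))
    (hμ : μ = (ENNReal.ofReal θ) • (volume.restrict (XsetPi k)))
    (hmarg : ∀ A : Set (Fin k → ℝ), MeasurableSet A → ∀ m : ℕ,
      (P {ω | Ψ ω A = m}).toReal =
        Real.exp (-(μ A).toReal) * (μ A).toReal ^ m / (Nat.factorial m : ℝ))
    (hind : ∀ (n : ℕ) (A : Fin n → Set (Fin k → ℝ)),
      (∀ i, MeasurableSet (A i)) → Pairwise (Function.onFun Disjoint A) →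
      iIndepFun (fun i ω => Ψ ω (A i)) P)
    -- atoms of `Ψ` lie in `X_k`
    (hsupp : ∀ ω, {y | Ψ ω {y} ≠ 0} ⊆ XsetPi k)
    -- `Ψ` is a point measure: it vanishes on a measurable set iff it has no atom there
    (hpoint : ∀ ω (A : Set (Fin k → ℝ)), MeasurableSet A →
      (Ψ ω A = 0 ↔ ∀ y ∈ A, Ψ ω {y} = 0))
    -- the maximum range over atoms, `0` if there are none
    (R : Ω → ℝ)
    (hR : ∀ ω, R ω = sSup (insert 0 (coordRange '' {y | Ψ ω {y} ≠ 0}))) :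
    ∀ x : ℝ, x ∈ Set.Ico (0 : ℝ) 1 →
      (P {ω | R ω ≤ x}).toReal =
      Real.exp ((θ / k) * (k * x ^ (k - 1) - (k - 1) * x ^ k - 1)) := by
  obtain ⟨m, rfl⟩ : ∃ m, k = m + 1 := ⟨k - 1, by omega⟩
  rintro x ⟨hx0, hx1⟩
  -- the "bad" set
  set A : Set (Fin (m+1) → ℝ) := {y | x < coordRange y} with hAdef
  have hA : MeasurableSet A := by
    have : A = ⋃ i : Fin (m+1), ⋃ j : Fin (m+1), {y : Fin (m+1) → ℝ | x < y i - y j} := by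
      ext y
      simp only [hAdef, Set.mem_setOf_eq, Set.mem_iUnion]
      constructor
      · intro h
        obtain ⟨i, j, hij⟩ := coordRange_exists y
        exact ⟨i, j, hij ▸ h⟩
      · rintro ⟨i, j, hij⟩
        exact lt_of_lt_of_le hij (sub_le_coordRange y i j)
    rw [this]
    exact MeasurableSet.iUnion fun i => MeasurableSet.iUnion fun j =>
      measurableSet_lt measurable_const ((measurable_pi_apply i).sub (measurable_pi_apply j))
  -- event identification
  have hev : {ω | R ω ≤ x} = {ω | Ψ ω A = ((0 : ℕ) : ENNReal)} := by
    ext ω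
    simp only [Set.mem_setOf_eq, Nat.cast_zero]
    rw [hR ω, hpoint ω A hA]
    constructor
    · intro h y hyA
      by_contra hy0
      have hbdd : BddAbove (insert 0 (coordRange '' {y | Ψ ω {y} ≠ 0})) := by
        refine ⟨1, fun z hz => ?_⟩
        rcases hz with rfl | ⟨y', hy', rfl⟩
        · exact zero_le_one
        · exact coordRange_mem_bound y' (hsupp ω hy')
      have hmem : coordRange y ∈ insert 0 (coordRange '' {y | Ψ ω {y} ≠ 0}) :=
        Set.mem_insert_of_mem _ ⟨y, hy0, rfl⟩
      have : coordRange y ≤ x := le_trans (le_csSup hbdd hmem) h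
      exact absurd hyA (not_lt.mpr this)
    · intro h
      refine csSup_le (Set.insert_nonempty _ _) ?_
      rintro z (rfl | ⟨y', hy', rfl⟩)
      · exact hx0
      · by_contra hgt
        exact hy' (h y' (lt_of_not_ge hgt))
  rw [hev]
  have hmarg0 := hmarg A hA 0
  rw [hmarg0]
  -- the "good" slab set
  set G : Set (Fin (m+1) → ℝ) :=
    {y : Fin (m+1) → ℝ | y 0 ∈ Set.Icc (0:ℝ) 1 ∧
      ∀ i, y i ∈ Set.Icc (y 0) ((fun t => min 1 (t + x)) (y 0))} with hGdef
  have hgcont : Continuous fun t : ℝ => min 1 (t + x) :=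
    continuous_const.min (continuous_id.add continuous_const)
  have hGX : G ⊆ XsetPi (m+1) := by
    intro y hy
    rw [mem_XsetPi_iff]
    obtain ⟨h1, h2⟩ := hy
    exact ⟨h1, fun i => ⟨(h2 i).1, le_trans (h2 i).2 (min_le_left _ _)⟩⟩
  have hsplit : A ∩ XsetPi (m+1) = XsetPi (m+1) \ G := by
    ext y
    simp only [Set.mem_inter_iff, Set.mem_diff]
    constructor
    · rintro ⟨hyA, hyX⟩
      refine ⟨hyX, fun hyG => ?_⟩
      have hle : coordRange y ≤ x := by
        rw [coordRange_le_iff y hyX]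
        intro i
        exact le_trans (hyG.2 i).2 (min_le_right _ _)
      exact absurd hyA (not_lt.mpr hle)
    · rintro ⟨hyX, hyG⟩
      refine ⟨?_, hyX⟩
      by_contra hylt
      have hle : coordRange y ≤ x := not_lt.mp hylt
      rw [coordRange_le_iff y hyX] at hle
      refine hyG ⟨(mem_XsetPi_iff y).mp hyX |>.1, fun i => ?_⟩
      refine ⟨((mem_XsetPi_iff y).mp hyX).2 i |>.1, le_min ?_ (hle i)⟩
      exact ((mem_XsetPi_iff y).mp hyX).2 i |>.2
  -- volumes
  have hvolX : volume (XsetPi (m+1)) = ENNReal.ofReal (1 / (m + 1)) := by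
    have hset : XsetPi (m+1) = {y : Fin (m+1) → ℝ | y 0 ∈ Set.Icc (0:ℝ) 1 ∧
        ∀ i, y i ∈ Set.Icc (y 0) ((fun _ : ℝ => (1:ℝ)) (y 0))} := by
      ext y; exact mem_XsetPi_iff y
    rw [hset, slice_vol m (fun _ => 1) measurable_const (fun t ht => ht.2),
      lint_conv m (fun t => 1 - t) (continuous_const.sub continuous_id)
        (fun t ht => by show (0:ℝ) ≤ 1 - t; linarith [ht.2]), I1]
  have hvolG : volume G = ENNReal.ofReal ((1 - x) * x ^ m + x ^ (m + 1) / (m + 1)) := by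
    rw [hGdef, slice_vol m (fun t => min 1 (t + x)) hgcont.measurable
      (fun t ht => le_min ht.2 (by linarith)),
      lint_conv m (fun t => min 1 (t + x) - t) (hgcont.sub continuous_id)
        (fun t ht => by
          show (0:ℝ) ≤ min 1 (t + x) - t
          have : t ≤ min 1 (t + x) := le_min ht.2 (by linarith)
          linarith),
      I2 m x hx0 hx1.le]
  have hGmeas : MeasurableSet G := slice_meas m _ hgcont.measurable
  -- compute μ A
  have hμA : (μ A).toReal = θ * (1 / (m + 1) - ((1 - x) * x ^ m + x ^ (m + 1) / (m + 1))) := by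
    have hvol_le : volume G ≤ volume (XsetPi (m+1)) := measure_mono hGX
    have hrw : μ A = ENNReal.ofReal θ * (volume (XsetPi (m+1)) - volume G) := by
      rw [hμ, Measure.smul_apply, smul_eq_mul, Measure.restrict_apply hA, hsplit,
        measure_diff hGX hGmeas.nullMeasurableSet (by rw [hvolG]; exact ENNReal.ofReal_ne_top)]
    rw [hrw, ENNReal.toReal_mul, ENNReal.toReal_ofReal hθ.le,
      ENNReal.toReal_sub_of_le hvol_le (by rw [hvolX]; exact ENNReal.ofReal_ne_top),
      hvolX, hvolG, ENNReal.toReal_ofReal (by positivity),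
      ENNReal.toReal_ofReal (add_nonneg (mul_nonneg (by linarith) (pow_nonneg hx0 m))
        (div_nonneg (pow_nonneg hx0 (m+1)) (by positivity)))]
  rw [hμA]
  have hm1 : ((m:ℝ) + 1) ≠ 0 := by positivity
  have hexp : -(θ * (1 / (m + 1) - ((1 - x) * x ^ m + x ^ (m + 1) / (m + 1))))
      = θ / (↑(m+1)) * (↑(m+1) * x ^ (m + 1 - 1) - (↑(m+1) - 1) * x ^ (m+1) - 1) := by
    have : m + 1 - 1 = m := rfl
    rw [this]
    push_cast
    field_simp
    ring
  rw [Nat.factorial_zero]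
  push_cast
  rw [pow_zero]
  rw [hexp]
  push_cast
  ring
end

section
/- Define G(t) = t^{−1} exp{θ₁((1−e^{−t})/t − 1)} for t > 0. Then G(t) = ∫_0^∞ e^{−tx} F(x) dx where F(x) = e^{−θ₁} ∑_{j=0}^{⌊x⌋} ((−1)^j/j!) (θ₁(x−j))^{j/2} I_j(2√(θ₁(x−j))) for x ≥ 0, with I_j the modified Bessel function of the first kind. Equivalently, for a random variable S with Laplace transform E e^{−tS} = exp{θ₁((1−e^{−t})/t − 1)}, its CDF is F. -/
open MeasureTheory

/-- The modified Bessel function of the first kind of integer order `j`: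
`I_j(z) = ∑_{m≥0} (z/2)^{2m+j} / (m! (m+j)!)`. -/
noncomputable def besselI (j : ℕ) (z : ℝ) : ℝ :=
  ∑' m : ℕ, (z / 2) ^ (2 * m + j) / ((Nat.factorial m : ℝ) * (Nat.factorial (m + j) : ℝ))

/-- `F(x) = e^{−θ₁} ∑_{j=0}^{⌊x⌋} ((−1)^j/j!) (θ₁(x−j))^{j/2} I_j(2√(θ₁(x−j)))`, the CDF of
the limiting sum of fixed points; here `(θ₁(x−j))^{j/2}` is written `√(θ₁(x−j))^j`. -/
noncomputable def besselCDF (θ : ℝ) (x : ℝ) : ℝ :=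
  Real.exp (-θ) * ∑ j ∈ Finset.range (⌊x⌋₊ + 1),
    ((-1 : ℝ) ^ j / (Nat.factorial j : ℝ)) * Real.sqrt (θ * (x - j)) ^ j *
      besselI j (2 * Real.sqrt (θ * (x - j)))

open Set Real Filter Asymptotics Topology

namespace BesselCDFAux

lemma exp_tsum (y : ℝ) : ∑' n : ℕ, y ^ n / n.factorial = Real.exp y := by
  rw [Real.exp_eq_exp_ℝ, NormedSpace.exp_eq_tsum_div]

lemma sqrt_pow_mul_besselI {u : ℝ} (hu : 0 ≤ u) (j : ℕ) :
    Real.sqrt u ^ j * besselI j (2 * Real.sqrt u) =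
      ∑' m : ℕ, u ^ (m + j) / ((Nat.factorial m : ℝ) * (Nat.factorial (m + j) : ℝ)) := by
  rw [besselI]
  have h2 : (2 : ℝ) * Real.sqrt u / 2 = Real.sqrt u := by ring
  rw [h2, ← tsum_mul_left]
  congr 1; ext m
  rw [← mul_div_assoc, ← pow_add]
  have h3 : j + (2 * m + j) = 2 * (m + j) := by ring
  rw [h3, pow_mul, Real.sq_sqrt hu]

lemma tendsto_aux {b : ℝ} (hb : 0 < b) (k : ℕ) :
    Tendsto (fun x : ℝ => x ^ k * Real.exp (-b * x)) atTop (𝓝 0) := by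
  have h1 := (tendsto_pow_mul_exp_neg_atTop_nhds_zero k).comp
    (tendsto_id.const_mul_atTop hb)
  have h2 := h1.const_mul ((b : ℝ) ^ k)⁻¹
  rw [mul_zero] at h2
  refine h2.congr fun x => ?_
  have hbk : (b : ℝ) ^ k ≠ 0 := by positivity
  simp only [Function.comp, id_eq]
  rw [mul_pow]
  field_simp

lemma isBigO_aux (t : ℝ) (ht : 0 < t) (a : ℝ) (k : ℕ) :
    (fun x : ℝ => Real.exp (-t * x) * (x - a) ^ k) =O[atTop]
      fun x : ℝ => Real.exp (-(t / 2) * x) := by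
  have hhalf : 0 < t / 2 := by linarith
  have key : Tendsto (fun x : ℝ => (x - a) ^ k * Real.exp (-(t / 2) * x)) atTop (𝓝 0) := by
    have h0 := (tendsto_aux hhalf k).comp (tendsto_atTop_add_const_right atTop (-a) tendsto_id)
    have h1 := h0.const_mul (Real.exp (-(t / 2) * a))
    rw [mul_zero] at h1
    refine h1.congr fun x => ?_
    simp only [Function.comp, id_eq]
    rw [← sub_eq_add_neg, mul_comm (Real.exp _), mul_assoc, ← Real.exp_add]
    ring_nf
  have hprod : (fun x : ℝ => Real.exp (-t * x) * (x - a) ^ k) =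
      fun x : ℝ => Real.exp (-(t / 2) * x) * ((x - a) ^ k * Real.exp (-(t / 2) * x)) := by
    funext x
    rw [mul_comm ((x - a) ^ k), ← mul_assoc, ← Real.exp_add]
    ring_nf
  rw [hprod]
  calc (fun x : ℝ => Real.exp (-(t / 2) * x) * ((x - a) ^ k * Real.exp (-(t / 2) * x)))
      =O[atTop] fun x : ℝ => Real.exp (-(t / 2) * x) * 1 :=
        (isBigO_refl _ _).mul (key.isBigO_one ℝ)
    _ = fun x : ℝ => Real.exp (-(t / 2) * x) := by funext x; rw [mul_one]

lemma integrableOn_aux (t : ℝ) (ht : 0 < t) (a : ℝ) (k : ℕ) :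
    IntegrableOn (fun x : ℝ => Real.exp (-t * x) * (x - a) ^ k) (Set.Ioi a) :=
  integrable_of_isBigO_exp_neg (by linarith : (0:ℝ) < t / 2)
    (Continuous.continuousOn (by continuity)) (isBigO_aux t ht a k)

lemma integral_shift {t : ℝ} (ht : 0 < t) (a : ℝ) (k : ℕ) :
    ∫ x in Set.Ioi a, Real.exp (-t * x) * (x - a) ^ k
      = Real.exp (-t * a) * ((k.factorial : ℝ) / t ^ (k + 1)) := by
  have hemb : MeasurableEmbedding (fun x : ℝ => x + a) :=
    (Homeomorph.addRight a).measurableEmbedding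
  have hmap : Measure.map (fun x : ℝ => x + a) volume = volume :=
    map_add_right_eq_self volume a
  have h1 : ∫ x in Set.Ioi a, Real.exp (-t * x) * (x - a) ^ k
      = ∫ y in (fun x : ℝ => x + a) ⁻¹' Set.Ioi a,
          Real.exp (-t * (y + a)) * (y + a - a) ^ k := by
    rw [← hemb.setIntegral_map (fun x => Real.exp (-t * x) * (x - a) ^ k) (Set.Ioi a), hmap]
  have hpre : (fun x : ℝ => x + a) ⁻¹' Set.Ioi a = Set.Ioi 0 := by
    ext y; simp
  rw [h1, hpre]
  have h2 : ∀ y : ℝ, Real.exp (-t * (y + a)) * (y + a - a) ^ k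
      = Real.exp (-t * a) * (Real.exp (-t * y) * y ^ k) := by
    intro y
    rw [add_sub_cancel_right, ← mul_assoc, ← Real.exp_add]
    ring_nf
  simp_rw [h2]
  rw [MeasureTheory.integral_const_mul]
  congr 1
  have h := Real.integral_rpow_mul_exp_neg_mul_Ioi (a := (k : ℝ) + 1) (r := t)
    (by positivity) ht
  have heq : ∫ x in Set.Ioi (0:ℝ), Real.exp (-t * x) * x ^ k
      = ∫ x in Set.Ioi (0:ℝ), x ^ ((k : ℝ) + 1 - 1) * Real.exp (-(t * x)) := by
    refine setIntegral_congr_fun measurableSet_Ioi fun x hx => ?_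
    rw [add_sub_cancel_right, Real.rpow_natCast, neg_mul, mul_comm]
  rw [heq, h]
  have hc : ((k : ℝ) + 1) = ((k + 1 : ℕ) : ℝ) := by push_cast; ring
  rw [Real.Gamma_nat_eq_factorial, hc, Real.rpow_natCast, one_div, inv_pow]
  field_simp

lemma ae_inter (a : ℝ) (ha : 0 ≤ a) :
    (Set.Ioi (0:ℝ) ∩ Set.Ici a : Set ℝ) =ᵐ[volume] Set.Ioi a := by
  have h1 : (Set.Ici a : Set ℝ) =ᵐ[volume] Set.Ioi a := (Ioi_ae_eq_Ici (a := a)).symm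
  exact ((Filter.EventuallyEq.refl _ _).inter h1).trans
    (Filter.EventuallyEq.of_eq (by rw [Set.Ioi_inter_Ioi, max_eq_right ha]))

lemma fun_eq_indicator (t a : ℝ) (k : ℕ) :
    (fun x : ℝ => Real.exp (-t * x) * Set.indicator (Set.Ici a) (fun y => (y - a) ^ k) x)
      = Set.indicator (Set.Ici a) (fun y => Real.exp (-t * y) * (y - a) ^ k) := by
  funext x
  by_cases h : x ∈ Set.Ici a <;>
    simp [Set.indicator_of_mem, Set.indicator_of_notMem, h]

lemma integrable_ind {t : ℝ} (ht : 0 < t) {a : ℝ} (ha : 0 ≤ a) (k : ℕ) :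
    IntegrableOn (fun x : ℝ => Real.exp (-t * x) *
      Set.indicator (Set.Ici a) (fun y => (y - a) ^ k) x) (Set.Ioi 0) := by
  rw [fun_eq_indicator, IntegrableOn, integrable_indicator_iff measurableSet_Ici,
    IntegrableOn, Measure.restrict_restrict measurableSet_Ici]
  refine (integrableOn_aux t ht a k).congr_set_ae ?_
  exact (Filter.EventuallyEq.of_eq (Set.inter_comm (Set.Ici a) (Set.Ioi (0:ℝ)))).trans
    (ae_inter a ha)

lemma integral_ind {t : ℝ} (ht : 0 < t) {a : ℝ} (ha : 0 ≤ a) (k : ℕ) :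
    ∫ x in Set.Ioi (0:ℝ), Real.exp (-t * x) *
        Set.indicator (Set.Ici a) (fun y => (y - a) ^ k) x
      = Real.exp (-t * a) * ((k.factorial : ℝ) / t ^ (k + 1)) := by
  rw [fun_eq_indicator, setIntegral_indicator measurableSet_Ici,
    setIntegral_congr_set (ae_inter a ha), integral_shift ht a k]

/-- The (j,m)-term of the double series expansion of `besselCDF`. -/
noncomputable def bTerm (θ : ℝ) (p : ℕ × ℕ) (x : ℝ) : ℝ :=
  ((-1) ^ p.1 * θ ^ (p.2 + p.1) /
      ((p.1.factorial : ℝ) * (p.2.factorial : ℝ) * ((p.2 + p.1).factorial : ℝ))) *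
    Set.indicator (Set.Ici (p.1 : ℝ)) (fun y => (y - (p.1 : ℝ)) ^ (p.2 + p.1)) x

lemma bTerm_abs_le {θ : ℝ} (hθ : 0 ≤ θ) (p : ℕ × ℕ) {x : ℝ} (hx : 0 ≤ x) :
    |bTerm θ p x| ≤ ((θ * x) ^ p.1 / p.1.factorial) * ((θ * x) ^ p.2 / p.2.factorial) := by
  obtain ⟨j, m⟩ := p
  by_cases h : x ∈ Set.Ici (j : ℝ)
  · have hxj : (j : ℝ) ≤ x := h
    rw [bTerm, Set.indicator_of_mem h]
    have hpow : 0 ≤ (x - (j:ℝ)) ^ (m + j) := by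
      have : (0:ℝ) ≤ x - j := by linarith
      positivity
    rw [abs_mul, abs_of_nonneg hpow, abs_div, abs_mul, abs_pow, abs_pow, abs_neg, abs_one,
      one_pow, one_mul, abs_of_nonneg hθ]
    have hden : |((j.factorial : ℝ) * (m.factorial : ℝ) * ((m + j).factorial : ℝ))|
        = (j.factorial : ℝ) * (m.factorial : ℝ) * ((m + j).factorial : ℝ) := by
      rw [abs_of_pos]; positivity
    rw [hden]
    have hle1 : (x - (j:ℝ)) ^ (m + j) ≤ x ^ (m + j) := by
      apply pow_le_pow_left₀ (by linarith) (by linarith)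
    calc θ ^ (m + j) / ((j.factorial : ℝ) * m.factorial * (m + j).factorial) * (x - j) ^ (m + j)
        ≤ θ ^ (m + j) / ((j.factorial : ℝ) * m.factorial * (m + j).factorial) * x ^ (m + j) := by
          gcongr
      _ ≤ θ ^ (m + j) / ((j.factorial : ℝ) * m.factorial * 1) * x ^ (m + j) := by
          have hfac : (1:ℝ) ≤ ((m + j).factorial : ℝ) := by
            exact_mod_cast Nat.one_le_iff_ne_zero.mpr (m + j).factorial_ne_zero
          gcongr
      _ = ((θ * x) ^ j / j.factorial) * ((θ * x) ^ m / m.factorial) := by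
          rw [mul_one, pow_add, pow_add, mul_pow, mul_pow]
          field_simp
  · rw [bTerm, Set.indicator_of_notMem h, mul_zero, abs_zero]
    positivity

lemma summable_pair (r s : ℝ) (hr : 0 ≤ r) (hs : 0 ≤ s) :
    Summable (fun p : ℕ × ℕ => (r ^ p.1 / p.1.factorial) * (s ^ p.2 / p.2.factorial)) :=
  (Real.summable_pow_div_factorial r).mul_of_nonneg (Real.summable_pow_div_factorial s)
    (fun n => by positivity) (fun n => by positivity)

lemma summable_bTerm {θ : ℝ} (hθ : 0 ≤ θ) {x : ℝ} (hx : 0 ≤ x) :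
    Summable (fun p : ℕ × ℕ => bTerm θ p x) := by
  rw [← summable_abs_iff]
  exact (summable_pair (θ * x) (θ * x) (by positivity) (by positivity)).of_nonneg_of_le
    (fun _ => abs_nonneg _) (fun p => bTerm_abs_le hθ p hx)

lemma besselCDF_eq_tsum {θ : ℝ} (hθ : 0 < θ) {x : ℝ} (hx : 0 ≤ x) :
    besselCDF θ x = Real.exp (-θ) * ∑' p : ℕ × ℕ, bTerm θ p x := by
  rw [besselCDF]
  congr 1
  rw [Summable.tsum_prod (summable_bTerm hθ.le hx)]
  rw [tsum_eq_sum (s := Finset.range (⌊x⌋₊ + 1)) ?hvanish]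
  case hvanish =>
    intro j hj
    rw [Finset.mem_range, not_lt] at hj
    have hjx : x < j := (Nat.floor_lt hx).mp (by omega)
    have hnot : x ∉ Set.Ici (j : ℝ) := fun h => absurd (Set.mem_Ici.mp h) (not_le.mpr hjx)
    simp [bTerm, Set.indicator_of_notMem hnot]
  refine Finset.sum_congr rfl fun j hj => ?_
  have hjx : (j : ℝ) ≤ x := by
    rw [Finset.mem_range] at hj
    have h1 : j ≤ ⌊x⌋₊ := by omega
    calc (j : ℝ) ≤ (⌊x⌋₊ : ℝ) := by exact_mod_cast h1
      _ ≤ x := Nat.floor_le hx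
  have hu : 0 ≤ θ * (x - j) := mul_nonneg hθ.le (by linarith)
  have hmem : x ∈ Set.Ici (j : ℝ) := hjx
  rw [mul_assoc, sqrt_pow_mul_besselI hu j, ← tsum_mul_left]
  congr 1; ext m
  rw [bTerm, Set.indicator_of_mem hmem]
  have hjf : (j.factorial : ℝ) ≠ 0 := by exact_mod_cast j.factorial_ne_zero
  have hmf : (m.factorial : ℝ) ≠ 0 := by exact_mod_cast m.factorial_ne_zero
  have hmjf : ((m + j).factorial : ℝ) ≠ 0 := by exact_mod_cast (m + j).factorial_ne_zero
  rw [mul_pow]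
  field_simp

lemma signed_val {θ t : ℝ} (ht : 0 < t) (j m : ℕ) :
    ((-1:ℝ) ^ j * θ ^ (m + j) /
        ((j.factorial : ℝ) * (m.factorial : ℝ) * ((m + j).factorial : ℝ))) *
      (Real.exp (-t * j) * (((m + j).factorial : ℝ) / t ^ (m + j + 1)))
    = t⁻¹ * ((-(θ * Real.exp (-t)) / t) ^ j / (j.factorial : ℝ)) *
        ((θ / t) ^ m / (m.factorial : ℝ)) := by
  have hexp : Real.exp (-t * (j:ℕ)) = Real.exp (-t) ^ j := by
    rw [← Real.exp_nat_mul]; ring_nf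
  have hjf : (j.factorial : ℝ) ≠ 0 := by exact_mod_cast j.factorial_ne_zero
  have hmf : (m.factorial : ℝ) ≠ 0 := by exact_mod_cast m.factorial_ne_zero
  have hmjf : ((m + j).factorial : ℝ) ≠ 0 := by exact_mod_cast (m + j).factorial_ne_zero
  rw [hexp, div_pow, div_pow, neg_pow (θ * Real.exp (-t)), mul_pow, pow_add θ, pow_add t,
    pow_add t, pow_one]
  field_simp

lemma unsigned_val {θ t : ℝ} (ht : 0 < t) (j m : ℕ) :
    (θ ^ (m + j) /
        ((j.factorial : ℝ) * (m.factorial : ℝ) * ((m + j).factorial : ℝ))) *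
      (Real.exp (-t * j) * (((m + j).factorial : ℝ) / t ^ (m + j + 1)))
    = t⁻¹ * ((θ * Real.exp (-t) / t) ^ j / (j.factorial : ℝ)) *
        ((θ / t) ^ m / (m.factorial : ℝ)) := by
  have hexp : Real.exp (-t * (j:ℕ)) = Real.exp (-t) ^ j := by
    rw [← Real.exp_nat_mul]; ring_nf
  have hjf : (j.factorial : ℝ) ≠ 0 := by exact_mod_cast j.factorial_ne_zero
  have hmf : (m.factorial : ℝ) ≠ 0 := by exact_mod_cast m.factorial_ne_zero
  have hmjf : ((m + j).factorial : ℝ) ≠ 0 := by exact_mod_cast (m + j).factorial_ne_zero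
  rw [hexp, div_pow, div_pow, mul_pow, pow_add θ, pow_add t, pow_add t, pow_one]
  field_simp

lemma bTerm_integral {θ t : ℝ} (ht : 0 < t) (p : ℕ × ℕ) :
    ∫ x in Set.Ioi (0:ℝ), Real.exp (-t * x) * bTerm θ p x
    = t⁻¹ * ((-(θ * Real.exp (-t)) / t) ^ p.1 / (p.1.factorial : ℝ)) *
        ((θ / t) ^ p.2 / (p.2.factorial : ℝ)) := by
  obtain ⟨j, m⟩ := p
  have hfun : (fun x : ℝ => Real.exp (-t * x) * bTerm θ (j, m) x)
      = fun x : ℝ => ((-1:ℝ) ^ j * θ ^ (m + j) /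
          ((j.factorial : ℝ) * (m.factorial : ℝ) * ((m + j).factorial : ℝ))) *
        (Real.exp (-t * x) *
          Set.indicator (Set.Ici (j : ℝ)) (fun y => (y - (j:ℝ)) ^ (m + j)) x) := by
    funext x; rw [bTerm]; ring
  rw [hfun, MeasureTheory.integral_const_mul,
    integral_ind ht (Nat.cast_nonneg j) (m + j), signed_val ht j m]

lemma bTerm_lintegral {θ t : ℝ} (hθ : 0 < θ) (ht : 0 < t) (p : ℕ × ℕ) :
    ∫⁻ x in Set.Ioi (0:ℝ), ‖Real.exp (-t * x) * bTerm θ p x‖₊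
    = ENNReal.ofReal (t⁻¹ * ((θ * Real.exp (-t) / t) ^ p.1 / (p.1.factorial : ℝ)) *
        ((θ / t) ^ p.2 / (p.2.factorial : ℝ))) := by
  obtain ⟨j, m⟩ := p
  set Cabs : ℝ := θ ^ (m + j) /
    ((j.factorial : ℝ) * (m.factorial : ℝ) * ((m + j).factorial : ℝ)) with hCabs
  have hind_nonneg : ∀ x : ℝ,
      0 ≤ Set.indicator (Set.Ici (j : ℝ)) (fun y => (y - (j:ℝ)) ^ (m + j)) x := by
    intro x
    apply Set.indicator_nonneg
    intro y hy
    have : (0:ℝ) ≤ y - j := sub_nonneg.mpr (Set.mem_Ici.mp hy)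
    positivity
  have habs : ∀ x : ℝ, ‖Real.exp (-t * x) * bTerm θ (j, m) x‖
      = Cabs * (Real.exp (-t * x) *
          Set.indicator (Set.Ici (j : ℝ)) (fun y => (y - (j:ℝ)) ^ (m + j)) x) := by
    intro x
    rw [Real.norm_eq_abs, bTerm, abs_mul, abs_of_nonneg (Real.exp_nonneg _), abs_mul,
      abs_of_nonneg (hind_nonneg x), abs_div, abs_mul, abs_pow, abs_pow, abs_neg, abs_one,
      one_pow, one_mul, abs_of_nonneg hθ.le]
    rw [abs_of_pos (by positivity : (0:ℝ) <
      (j.factorial : ℝ) * (m.factorial : ℝ) * ((m + j).factorial : ℝ))]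
    rw [hCabs]; ring
  have hg_int : Integrable (fun x : ℝ => Cabs * (Real.exp (-t * x) *
      Set.indicator (Set.Ici (j : ℝ)) (fun y => (y - (j:ℝ)) ^ (m + j)) x))
      (volume.restrict (Set.Ioi 0)) :=
    (integrable_ind ht (Nat.cast_nonneg j) (m + j)).const_mul Cabs
  have hg_nn : 0 ≤ᵐ[volume.restrict (Set.Ioi (0:ℝ))]
      fun x : ℝ => Cabs * (Real.exp (-t * x) *
        Set.indicator (Set.Ici (j : ℝ)) (fun y => (y - (j:ℝ)) ^ (m + j)) x) := by
    refine Filter.Eventually.of_forall fun x => ?_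
    have h1 : 0 ≤ Cabs := by rw [hCabs]; positivity
    have h2 := hind_nonneg x
    positivity
  calc ∫⁻ x in Set.Ioi (0:ℝ), ‖Real.exp (-t * x) * bTerm θ (j, m) x‖₊
      = ∫⁻ x in Set.Ioi (0:ℝ), ENNReal.ofReal (Cabs * (Real.exp (-t * x) *
          Set.indicator (Set.Ici (j : ℝ)) (fun y => (y - (j:ℝ)) ^ (m + j)) x)) := by
        refine lintegral_congr fun x => ?_
        rw [show ((‖Real.exp (-t * x) * bTerm θ (j, m) x‖₊ : ENNReal)) =
          ENNReal.ofReal ‖Real.exp (-t * x) * bTerm θ (j, m) x‖ from (ofReal_norm _).symm, habs x]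
    _ = ENNReal.ofReal (∫ x in Set.Ioi (0:ℝ), Cabs * (Real.exp (-t * x) *
          Set.indicator (Set.Ici (j : ℝ)) (fun y => (y - (j:ℝ)) ^ (m + j)) x)) :=
        (ofReal_integral_eq_lintegral_ofReal hg_int hg_nn).symm
    _ = ENNReal.ofReal (t⁻¹ * ((θ * Real.exp (-t) / t) ^ j / (j.factorial : ℝ)) *
          ((θ / t) ^ m / (m.factorial : ℝ))) := by
        rw [MeasureTheory.integral_const_mul, integral_ind ht (Nat.cast_nonneg j) (m + j),
          unsigned_val ht j m]

lemma aesm_bTerm (θ t : ℝ) (p : ℕ × ℕ) :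
    AEStronglyMeasurable (fun x : ℝ => Real.exp (-t * x) * bTerm θ p x)
      (volume.restrict (Set.Ioi 0)) := by
  apply Measurable.aestronglyMeasurable
  apply Measurable.mul
  · exact (Real.continuous_exp.comp (continuous_const.mul continuous_id)).measurable
  · apply Measurable.const_mul
    exact Measurable.indicator
      (((measurable_id.sub_const _).pow_const _)) measurableSet_Ici

end BesselCDFAux

open BesselCDFAux

/-- `G(t) = t^{−1} exp{θ₁((1−e^{−t})/t − 1)}` is the Laplace transform of `F`:
`G(t) = ∫_0^∞ e^{−tx} F(x) dx` for all `t > 0`. -/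
theorem laplace_transform_besselCDF (θ : ℝ) (hθ : 0 < θ) :
    ∀ t : ℝ, 0 < t →
      t⁻¹ * Real.exp (θ * ((1 - Real.exp (-t)) / t - 1)) =
      ∫ x in Set.Ioi (0 : ℝ), Real.exp (-t * x) * besselCDF θ x := by
  intro t ht
  have ht' : t ≠ 0 := ht.ne'
  -- step 1: pointwise expansion of the integrand on `Ioi 0`
  have step1 : ∫ x in Set.Ioi (0:ℝ), Real.exp (-t * x) * besselCDF θ x
      = ∫ x in Set.Ioi (0:ℝ), Real.exp (-θ) *
          ∑' p : ℕ × ℕ, Real.exp (-t * x) * bTerm θ p x := by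
    refine setIntegral_congr_fun measurableSet_Ioi fun x hx => ?_
    rw [besselCDF_eq_tsum hθ (le_of_lt hx), mul_left_comm, ← tsum_mul_left]
  -- step 2: swap integral and sum
  have hlintegral : ∑' p : ℕ × ℕ, ∫⁻ x in Set.Ioi (0:ℝ),
      ‖Real.exp (-t * x) * bTerm θ p x‖₊ ≠ ⊤ := by
    have hw_nonneg : ∀ p : ℕ × ℕ, 0 ≤ t⁻¹ *
        ((θ * Real.exp (-t) / t) ^ p.1 / (p.1.factorial : ℝ)) *
        ((θ / t) ^ p.2 / (p.2.factorial : ℝ)) := by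
      intro p; positivity
    have hw_summable : Summable (fun p : ℕ × ℕ => t⁻¹ *
        ((θ * Real.exp (-t) / t) ^ p.1 / (p.1.factorial : ℝ)) *
        ((θ / t) ^ p.2 / (p.2.factorial : ℝ))) := by
      have := (summable_pair (θ * Real.exp (-t) / t) (θ / t)
        (by positivity) (by positivity)).mul_left t⁻¹
      exact this.congr fun p => by ring
    calc ∑' p : ℕ × ℕ, ∫⁻ x in Set.Ioi (0:ℝ), ‖Real.exp (-t * x) * bTerm θ p x‖₊
        = ∑' p : ℕ × ℕ, ENNReal.ofReal (t⁻¹ *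
            ((θ * Real.exp (-t) / t) ^ p.1 / (p.1.factorial : ℝ)) *
            ((θ / t) ^ p.2 / (p.2.factorial : ℝ))) := by
          exact tsum_congr fun p => bTerm_lintegral hθ ht p
      _ = ENNReal.ofReal (∑' p : ℕ × ℕ, t⁻¹ *
            ((θ * Real.exp (-t) / t) ^ p.1 / (p.1.factorial : ℝ)) *
            ((θ / t) ^ p.2 / (p.2.factorial : ℝ))) :=
          (ENNReal.ofReal_tsum_of_nonneg hw_nonneg hw_summable).symm
      _ ≠ ⊤ := ENNReal.ofReal_ne_top
  have step2 : ∫ x in Set.Ioi (0:ℝ), ∑' p : ℕ × ℕ, Real.exp (-t * x) * bTerm θ p x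
      = ∑' p : ℕ × ℕ, ∫ x in Set.Ioi (0:ℝ), Real.exp (-t * x) * bTerm θ p x :=
    integral_tsum (fun p => aesm_bTerm θ t p) hlintegral
  -- step 3: evaluate the sum of integrals
  have hU : Summable fun j : ℕ => ‖(-(θ * Real.exp (-t)) / t) ^ j / (j.factorial : ℝ)‖ := by
    refine (Real.summable_pow_div_factorial |(-(θ * Real.exp (-t)) / t)|).congr fun j => ?_
    rw [norm_div, norm_pow, Real.norm_eq_abs, Real.norm_eq_abs, Nat.abs_cast]
  have hV : Summable fun m : ℕ => ‖(θ / t) ^ m / (m.factorial : ℝ)‖ := by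
    refine (Real.summable_pow_div_factorial |θ / t|).congr fun m => ?_
    rw [norm_div, norm_pow, Real.norm_eq_abs, Real.norm_eq_abs, Nat.abs_cast]
  have step3 : ∑' p : ℕ × ℕ, ∫ x in Set.Ioi (0:ℝ), Real.exp (-t * x) * bTerm θ p x
      = t⁻¹ * (Real.exp (-(θ * Real.exp (-t)) / t) * Real.exp (θ / t)) := by
    calc ∑' p : ℕ × ℕ, ∫ x in Set.Ioi (0:ℝ), Real.exp (-t * x) * bTerm θ p x
        = ∑' p : ℕ × ℕ, t⁻¹ * (((-(θ * Real.exp (-t)) / t) ^ p.1 / (p.1.factorial : ℝ)) *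
            ((θ / t) ^ p.2 / (p.2.factorial : ℝ))) := by
          refine tsum_congr fun p => ?_
          rw [bTerm_integral ht p, mul_assoc]
      _ = t⁻¹ * ∑' p : ℕ × ℕ, ((-(θ * Real.exp (-t)) / t) ^ p.1 / (p.1.factorial : ℝ)) *
            ((θ / t) ^ p.2 / (p.2.factorial : ℝ)) := tsum_mul_left
      _ = t⁻¹ * ((∑' j : ℕ, (-(θ * Real.exp (-t)) / t) ^ j / (j.factorial : ℝ)) *
            (∑' m : ℕ, (θ / t) ^ m / (m.factorial : ℝ))) := by
          rw [tsum_mul_tsum_of_summable_norm hU hV]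
      _ = t⁻¹ * (Real.exp (-(θ * Real.exp (-t)) / t) * Real.exp (θ / t)) := by
          rw [exp_tsum, exp_tsum]
  rw [step1, MeasureTheory.integral_const_mul, step2, step3, ← Real.exp_add]
  rw [← mul_assoc, mul_comm (Real.exp (-θ)) t⁻¹, mul_assoc, ← Real.exp_add]
  congr 1
  field_simp
  ring
end
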